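/- arXiv:1603.05647 — 3 statements merged into one kernel-verified Lean document; each statement's English description precedes it below -/
import Mathlib

section
/- Let R be a ring and M a left R-module such that every homogeneous component of the socle of M is finitely generated (i.e., for every simple R-module S, the sum of all submodules of M isomorphic to S is a finitely generated submodule). Then M is virtually semisimple if and only if M has an internal direct sum decomposition M = W ⊕ L where W is a semisimple R-module and L is a virtually semisimple R-module with Soc(L) = 0. -/
universe u v w

/-- A left `R`-module `M` is *virtually semisimple* if every submodule of `M` is
isomorphic, as an `R`-module, to a direct summand of `M`. -/
def IsVirtuallySemisimple (R : Type u) [Ring R] (M : Type v) [AddCommGroup M] [Module R M] :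
    Prop :=
  ∀ N : Submodule R M, ∃ K : Submodule R M, (∃ K' : Submodule R M, IsCompl K K') ∧
    Nonempty (N ≃ₗ[R] K)

/-- A module is *completely virtually semisimple* if every submodule is virtually semisimple. -/
def IsCompletelyVirtuallySemisimple (R : Type u) [Ring R] (M : Type v) [AddCommGroup M]
    [Module R M] : Prop :=
  ∀ N : Submodule R M, IsVirtuallySemisimple R N


/-- The socle of a module: the sum of all its simple submodules. -/
def moduleSocle (R : Type u) [Ring R] (M : Type v) [AddCommGroup M] [Module R M] :
    Submodule R M :=
  sSup {N : Submodule R M | IsSimpleModule R N}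

/-!
The socle of `M` is semisimple, so in a virtually semisimple `M` it is isomorphic to a summand `K`,
`M = K ⊕ L`. On each homogeneous component, which is finitely generated semisimple and so of finite
length, this copy of the socle inside the socle is an injective endomorphism, hence onto; thus
`K = Soc M` and `Soc L = 0`. A submodule of `L` is isomorphic to a summand `D` of `M` with zero
socle, so `Soc M` lies in the complement of `D`, and projecting along `Soc M` carries `D`
isomorphically onto a summand of `L`.

Conversely, for `N ≤ W ⊕ L` split `A = N ⊓ W` off with a complement `B` inside `W`. The rest
`N ⊓ (B ⊕ L)` meets `W` trivially, so it embeds into `L` and is isomorphic to a summand `C` of `L`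
with complement `D`; then `N ≅ A ⊕ C`, which has the complement `B ⊕ D`.
-/

open Submodule LinearMap

section ModularLattice

variable {α : Type*} [Lattice α] [BoundedOrder α] [IsModularLattice α]

theorem IsCompl.sup_sup {w l a b c d : α} (hwl : IsCompl w l) (hab : Disjoint a b)
    (hab' : a ⊔ b = w) (hcd : Disjoint c d) (hcd' : c ⊔ d = l) : IsCompl (a ⊔ c) (b ⊔ d) := by
  have ha : Disjoint a (b ⊔ d) := hab.disjoint_sup_right_of_disjoint_sup_left <|
    hab' ▸ hwl.disjoint.mono_right (hcd' ▸ le_sup_right)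
  have hc : Disjoint c (d ⊔ (a ⊔ b)) := hcd.disjoint_sup_right_of_disjoint_sup_left <|
    hcd' ▸ hab' ▸ hwl.disjoint.symm
  refine ⟨?_, codisjoint_iff.2 (by rw [sup_sup_sup_comm, hab', hcd', hwl.sup_eq_top])⟩
  rw [sup_comm a c]
  refine ha.disjoint_sup_left_of_disjoint_sup_right ?_
  rwa [sup_comm d, sup_assoc] at hc

end ModularLattice

section Development

variable {R : Type u} [Ring R] {M : Type v} [AddCommGroup M] [Module R M]
  {N : Type w} [AddCommGroup N] [Module R N]

namespace Submodule

noncomputable def prodEquivSupOfDisjoint {p q : Submodule R M} (h : Disjoint p q) :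
    (p × q) ≃ₗ[R] ↥(p ⊔ q) :=
  have hinj : Function.Injective (p.subtype.coprod q.subtype) := by
    rw [← ker_eq_bot, ker_coprod_of_disjoint_range, ker_subtype, ker_subtype, prod_bot]
    rwa [range_subtype, range_subtype]
  (LinearEquiv.ofInjective _ hinj).trans (LinearEquiv.ofEq _ _ (sup_eq_range p q).symm)

noncomputable def supEquivSupOfDisjoint {p q q' : Submodule R M} (h : Disjoint p q)
    (h' : Disjoint p q') (e : q ≃ₗ[R] q') : ↥(p ⊔ q) ≃ₗ[R] ↥(p ⊔ q') :=
  (prodEquivSupOfDisjoint h).symm ≪≫ₗ (LinearEquiv.refl R p).prodCongr e ≪≫ₗ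
    prodEquivSupOfDisjoint h'

noncomputable def equivMapOfDisjointKer (f : M →ₗ[R] N) {p : Submodule R M}
    (h : Disjoint p (ker f)) : p ≃ₗ[R] p.map f :=
  (LinearEquiv.ofInjective _ (injective_domRestrict_iff.2 h)).trans
    (LinearEquiv.ofEq _ _ (range_domRestrict p f))

theorem exists_isCompl_linearEquiv_of_le {K L D D' : Submodule R M} (hKL : IsCompl K L)
    (hD : IsCompl D D') (hKD' : K ≤ D') :
    ∃ A B : Submodule R L, IsCompl A B ∧ Nonempty (D ≃ₗ[R] A) := by
  let π := L.projectionOnto K hKL.symm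
  refine ⟨D.map π, D'.map π, ⟨?_, ?_⟩, ⟨equivMapOfDisjointKer π ?_⟩⟩
  · rw [disjoint_iff, map_inf_eq_map_inf_comap, comap_map_eq, ker_projectionOnto,
      sup_eq_left.2 hKD', hD.inf_eq_bot, map_bot]
  · rw [codisjoint_iff, ← map_sup, hD.sup_eq_top, map_top, range_projectionOnto]
  · rw [ker_projectionOnto]
    exact hD.disjoint.mono_right hKD'

end Submodule

section Socle

theorem le_moduleSocle {T : Submodule R M} (hT : IsSimpleModule R T) : T ≤ moduleSocle R M :=
  le_sSup hT

instance : IsSemisimpleModule R (moduleSocle R M) := by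
  rw [moduleSocle, sSup_eq_iSup]
  exact isSemisimpleModule_biSup_of_isSemisimpleModule_submodule fun _ hm =>
    have : IsSimpleModule R _ := hm; inferInstance

theorem moduleSocle_eq_top [IsSemisimpleModule R M] : moduleSocle R M = ⊤ :=
  IsSemisimpleModule.sSup_simples_eq_top R M

theorem isotypicComponent_le_moduleSocle (S : Type*) [AddCommGroup S] [Module R S]
    [IsSimpleModule R S] : isotypicComponent R M S ≤ moduleSocle R M :=
  sSup_le fun _ ⟨e⟩ => le_moduleSocle (IsSimpleModule.congr e)

theorem map_moduleSocle_le (f : M →ₗ[R] N) : (moduleSocle R M).map f ≤ moduleSocle R N :=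
  map_le_iff_le_comap.2 <| sSup_le fun T (_ : IsSimpleModule R T) =>
    map_le_iff_le_comap.1 <| (T.map_le_isotypicComponent f).trans
      (isotypicComponent_le_moduleSocle T)

theorem le_moduleSocle_of_isSemisimpleModule (K : Submodule R M) [IsSemisimpleModule R K] :
    K ≤ moduleSocle R M := by
  simpa [moduleSocle_eq_top] using map_moduleSocle_le K.subtype

theorem moduleSocle_eq_bot_of_injective {f : N →ₗ[R] M} (hf : Function.Injective f)
    (h : Disjoint (range f) (moduleSocle R M)) : moduleSocle R N = ⊥ :=
  map_injective_of_injective hf <| by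
    rw [Submodule.map_bot, ← le_bot_iff, ← h.eq_bot]
    exact le_inf map_le_range (map_moduleSocle_le f)

theorem moduleSocle_le_of_isCompl {D D' : Submodule R M} (h : IsCompl D D')
    (hD : moduleSocle R D = ⊥) : moduleSocle R M ≤ D' := by
  rw [← ker_projectionOnto h, le_ker_iff_map, ← le_bot_iff, ← hD]
  exact map_moduleSocle_le _

theorem isotypicComponent_le_range_of_injective {S : Type*} [AddCommGroup S] [Module R S]
    [IsSimpleModule R S] {P : Submodule R M} (hfg : (isotypicComponent R M S).FG)
    (hP : isotypicComponent R M S ≤ P) {f : P →ₗ[R] M} (hf : Function.Injective f) :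
    isotypicComponent R M S ≤ range f := by
  set C := isotypicComponent R M S
  have : Module.Finite R C := Module.Finite.iff_fg.2 hfg
  have hC : ∀ x : C, f (inclusion hP x) ∈ C := by
    have h := (f ∘ₗ inclusion hP).le_comap_isotypicComponent S
    rw [isotypicComponent_eq_top_iff.2 (IsIsotypicOfType.isotypicComponent R M S)] at h
    exact fun x => h trivial
  let g : C →ₗ[R] C := (f ∘ₗ inclusion hP).codRestrict C hC
  have hg : Function.Injective g := fun x y hxy =>
    inclusion_injective hP (hf (congrArg Subtype.val hxy))
  intro x hx
  obtain ⟨y, hy⟩ := IsArtinian.surjective_of_injective_endomorphism g hg ⟨x, hx⟩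
  exact ⟨inclusion hP y, congrArg Subtype.val hy⟩

theorem moduleSocle_eq_of_linearEquiv
    (hfg : ∀ T : Submodule R M, IsSimpleModule R T → (isotypicComponent R M T).FG)
    {K : Submodule R M} (e : moduleSocle R M ≃ₗ[R] K) : moduleSocle R M = K := by
  have : IsSemisimpleModule R K := .congr e.symm
  refine le_antisymm (sSup_le fun T (hT : IsSimpleModule R T) => ?_)
    (le_moduleSocle_of_isSemisimpleModule K)
  have hf := K.injective_subtype.comp e.injective
  have := isotypicComponent_le_range_of_injective (hfg T hT)
    (isotypicComponent_le_moduleSocle T) (f := K.subtype ∘ₗ e.toLinearMap) hf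
  simpa [range_comp] using T.le_isotypicComponent.trans this

end Socle

namespace IsVirtuallySemisimple

theorem of_isCompl_moduleSocle (hM : IsVirtuallySemisimple R M) {L : Submodule R M}
    (hL : IsCompl (moduleSocle R M) L) : IsVirtuallySemisimple R L := by
  intro N
  obtain ⟨D, ⟨D', hD⟩, ⟨e⟩⟩ := hM (N.map L.subtype)
  have hDsoc : moduleSocle R D = ⊥ := by
    refine moduleSocle_eq_bot_of_injective (f := (N.map L.subtype).subtype ∘ₗ e.symm.toLinearMap)
      ((N.map L.subtype).injective_subtype.comp e.symm.injective) ?_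
    rw [range_comp, LinearEquiv.range, Submodule.map_top, range_subtype]
    exact hL.disjoint.symm.mono_left (map_subtype_le L N)
  obtain ⟨A, B, hAB, ⟨e'⟩⟩ :=
    exists_isCompl_linearEquiv_of_le hL hD (moduleSocle_le_of_isCompl hD hDsoc)
  exact ⟨A, ⟨B, hAB⟩, ⟨(N.equivMapOfInjective _ L.injective_subtype).trans (e.trans e')⟩⟩

theorem exists_linearEquiv_of_disjoint {W L X : Submodule R M} (hWL : IsCompl W L)
    (hL : IsVirtuallySemisimple R L) (hX : Disjoint X W) :
    ∃ C D : Submodule R M, Disjoint C D ∧ C ⊔ D = L ∧ Nonempty (X ≃ₗ[R] C) := by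
  let π := L.projectionOnto W hWL.symm
  have hXπ : Disjoint X (ker π) := by rwa [ker_projectionOnto]
  obtain ⟨C, ⟨D, hCD⟩, ⟨e⟩⟩ := hL (X.map π)
  obtain ⟨hdisj, hsup⟩ := Set.Iic.isCompl_iff.1 (L.mapIic.isCompl_iff.1 hCD)
  exact ⟨C.map L.subtype, D.map L.subtype, hdisj, hsup, ⟨equivMapOfDisjointKer π hXπ ≪≫ₗ e ≪≫ₗ
    C.equivMapOfInjective _ L.injective_subtype⟩⟩

end IsVirtuallySemisimple

theorem isVirtuallySemisimple_of_isCompl {W L : Submodule R M} (hWL : IsCompl W L)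
    [IsSemisimpleModule R W] (hL : IsVirtuallySemisimple R L) : IsVirtuallySemisimple R M := by
  intro N
  obtain ⟨B, hBW, hAB, hAB'⟩ := Set.Iic.complementedLattice_iff.1
    (W.mapIic.complementedLattice_iff.1 inferInstance) (N ⊓ W) inf_le_right
  have hA : IsCompl (N ⊓ W) (B ⊔ L) :=
    (disjoint_iff.2 hAB).isCompl_sup_right_of_isCompl_sup_left (by rwa [hAB'])
  obtain ⟨hAN', hN⟩ :=
    Set.Iic.isCompl_iff.1 (Set.Iic.isCompl_inf_inf_of_isCompl_of_le hA inf_le_left)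
  simp only [inf_left_idem] at hAN' hN
  have hN'W : Disjoint (N ⊓ (B ⊔ L)) W := disjoint_iff.2 <| calc
    N ⊓ (B ⊔ L) ⊓ W = N ⊓ ((B ⊔ L) ⊓ W) := inf_assoc ..
    _ = N ⊓ W ⊓ B := by
      rw [sup_inf_assoc_of_le L hBW, hWL.symm.inf_eq_bot, sup_bot_eq, inf_assoc,
        inf_eq_right.2 hBW]
    _ = ⊥ := hAB
  obtain ⟨C, D, hCD, hCD', ⟨e⟩⟩ := hL.exists_linearEquiv_of_disjoint hWL hN'W
  have hAC : Disjoint (N ⊓ W) C := hWL.disjoint.mono inf_le_right (hCD' ▸ le_sup_left)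
  exact ⟨N ⊓ W ⊔ C, ⟨B ⊔ D, hWL.sup_sup (disjoint_iff.2 hAB) hAB' hCD hCD'⟩,
    ⟨LinearEquiv.ofEq _ _ hN.symm ≪≫ₗ supEquivSupOfDisjoint hAN' hAC e⟩⟩

end Development

/-- Suppose every homogeneous component of the socle of `M` is finitely generated (for every
simple module `S`, the sum of all submodules of `M` isomorphic to `S` is finitely generated).
Then `M` is virtually semisimple iff `M = W ⊕ L` (internally) with `W` semisimple and `L`
virtually semisimple with `Soc(L) = 0`. -/
theorem stmt_5 (R : Type u) [Ring R] (M : Type v) [AddCommGroup M] [Module R M]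
    (hhom : ∀ (S : Type v) [AddCommGroup S] [Module R S], IsSimpleModule R S →
      (sSup {N : Submodule R M | Nonempty (N ≃ₗ[R] S)}).FG) :
    IsVirtuallySemisimple R M ↔
      ∃ W L : Submodule R M, IsCompl W L ∧ IsSemisimpleModule R W ∧
        IsVirtuallySemisimple R L ∧ moduleSocle R L = ⊥ := by
  refine ⟨fun hM => ?_, fun ⟨W, L, hWL, hW, hL, _⟩ => isVirtuallySemisimple_of_isCompl hWL hL⟩
  obtain ⟨K, ⟨L, hKL⟩, ⟨e⟩⟩ := hM (moduleSocle R M)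
  rw [← moduleSocle_eq_of_linearEquiv (fun T => hhom T) e] at hKL
  refine ⟨_, L, hKL, inferInstance, hM.of_isCompl_moduleSocle hKL, ?_⟩
  refine moduleSocle_eq_bot_of_injective L.injective_subtype ?_
  rw [range_subtype]
  exact hKL.disjoint.symm
end

section
/- A ring R is left completely virtually semisimple if and only if every free left R-module is completely virtually semisimple; equivalently, R is left completely virtually semisimple if and only if every projective left R-module is virtually semisimple. -/
universe u v w

/-!
If `R` is left completely virtually semisimple, every left ideal is isomorphic to a summand
of `R`, hence projective. Well-order a basis `ι` of a free module; for a submodule `N` and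
`i : ι`, the coefficients at `i` of the elements of `N` supported on `{j ≤ i}` form a left ideal
`leadCoeffIdeal N i`. Splitting the projections onto these ideals gives, as in Kaplansky's
theorem on hereditary rings, `N ≅ ⨁ i, leadCoeffIdeal N i`. For `P ≤ N`,
each `leadCoeffIdeal P i` is isomorphic to a summand of the virtually semisimple ideal
`leadCoeffIdeal N i`, and summing over `i` makes `P` isomorphic to a summand of `N`.
"Isomorphic to a direct summand" is handled as "admits a split injection" (`Module.IsRetract`),
the form that passes through direct sums and isomorphisms.

Projective modules embed into free ones; conversely `R` and its ideals are projective.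
-/

open Submodule

namespace Module

variable (R : Type u) [Ring R] (A : Type v) (M : Type w) [AddCommGroup A] [Module R A]
  [AddCommGroup M] [Module R M]

def IsRetract : Prop :=
  ∃ (i : A →ₗ[R] M) (r : M →ₗ[R] A), r ∘ₗ i = LinearMap.id

variable {R A M}

theorem IsRetract.congr {A' M' : Type*} [AddCommGroup A'] [Module R A'] [AddCommGroup M']
    [Module R M'] (eA : A ≃ₗ[R] A') (eM : M ≃ₗ[R] M') (h : IsRetract R A M) :
    IsRetract R A' M' := by
  obtain ⟨i, r, hri⟩ := h
  refine ⟨eM ∘ₗ i ∘ₗ eA.symm, eA ∘ₗ r ∘ₗ eM.symm, ?_⟩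
  ext x
  simpa using congrArg eA (LinearMap.congr_fun hri (eA.symm x))

theorem isRetract_iff_exists_isCompl :
    IsRetract R A M ↔
      ∃ K : Submodule R M, (∃ K' : Submodule R M, IsCompl K K') ∧
        Nonempty (A ≃ₗ[R] K) := by
  constructor
  · rintro ⟨i, r, hri⟩
    have hleft : Function.LeftInverse r i := LinearMap.congr_fun hri
    refine ⟨LinearMap.range i,
      ⟨_, LinearMap.isCompl_of_proj (f := i.rangeRestrict ∘ₗ r) ?_⟩,
      ⟨LinearEquiv.ofLeftInverse hleft⟩⟩
    rintro ⟨_, y, rfl⟩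
    ext
    simp [hleft y]
  · rintro ⟨K, ⟨K', hKK'⟩, ⟨e⟩⟩
    refine ⟨K.subtype ∘ₗ e, e.symm ∘ₗ K.projectionOnto K' hKK', ?_⟩
    ext x
    simp [projectionOnto_apply_left]

theorem IsRetract.projective [Projective R M] (h : IsRetract R A M) : Projective R A :=
  let ⟨i, r, hri⟩ := h
  .of_split i r hri

theorem IsRetract.dfinsupp {ι : Type*} {A M : ι → Type*} [∀ i, AddCommGroup (A i)]
    [∀ i, Module R (A i)] [∀ i, AddCommGroup (M i)] [∀ i, Module R (M i)]
    (h : ∀ i, IsRetract R (A i) (M i)) : IsRetract R (Π₀ i, A i) (Π₀ i, M i) := by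
  choose i r hri using h
  refine ⟨DFinsupp.mapRange.linearMap i, DFinsupp.mapRange.linearMap r, ?_⟩
  rw [← DFinsupp.mapRange.linearMap_comp, funext hri, DFinsupp.mapRange.linearMap_id]

end Module

open Module

section VirtuallySemisimple

variable {R : Type u} [Ring R] {M : Type v} [AddCommGroup M] [Module R M]

theorem isVirtuallySemisimple_iff_isRetract :
    IsVirtuallySemisimple R M ↔ ∀ N : Submodule R M, IsRetract R N M :=
  forall_congr' fun _ => isRetract_iff_exists_isCompl.symm

theorem IsVirtuallySemisimple.of_linearEquiv {M' : Type w} [AddCommGroup M'] [Module R M']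
    (e : M ≃ₗ[R] M') (h : IsVirtuallySemisimple R M') : IsVirtuallySemisimple R M := by
  rw [isVirtuallySemisimple_iff_isRetract] at h ⊢
  exact fun N => (h (N.map (e : M →ₗ[R] M'))).congr (e.submoduleMap N).symm e.symm

theorem IsCompletelyVirtuallySemisimple.of_linearEquiv {M' : Type w} [AddCommGroup M']
    [Module R M'] (e : M ≃ₗ[R] M') (h : IsCompletelyVirtuallySemisimple R M') :
    IsCompletelyVirtuallySemisimple R M :=
  fun N => (h (N.map (e : M →ₗ[R] M'))).of_linearEquiv (e.submoduleMap N)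

theorem IsCompletelyVirtuallySemisimple.isVirtuallySemisimple
    (h : IsCompletelyVirtuallySemisimple R M) : IsVirtuallySemisimple R M :=
  (h ⊤).of_linearEquiv Submodule.topEquiv.symm

theorem IsVirtuallySemisimple.projective_submodule [Projective R M]
    (h : IsVirtuallySemisimple R M) (N : Submodule R M) : Projective R N :=
  (isVirtuallySemisimple_iff_isRetract.1 h N).projective

theorem isVirtuallySemisimple_submodule_iff {N : Submodule R M} :
    IsVirtuallySemisimple R N ↔ ∀ P ≤ N, IsRetract R P N := by
  rw [isVirtuallySemisimple_iff_isRetract]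
  refine ⟨fun h P hPN => (h _).congr (comapSubtypeEquivOfLe hPN) (.refl R N), fun h Q => ?_⟩
  exact (h _ (map_subtype_le N Q)).congr
    (Q.equivMapOfInjective N.subtype N.injective_subtype).symm (.refl R N)

end VirtuallySemisimple

theorem Finsupp.mem_supported_Iic_max' {ι M R : Type*} [LinearOrder ι] [AddCommMonoid M]
    [Semiring R] [Module R M] {x : ι →₀ M} (hx : x.support.Nonempty) :
    x ∈ Finsupp.supported M R (Set.Iic (x.support.max' hx)) :=
  (Finsupp.mem_supported R x).2 fun a ha => x.support.le_max' a ha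

section LeadCoeff

variable {R : Type u} [Ring R] {ι : Type w} [LinearOrder ι] (N : Submodule R (ι →₀ R))

noncomputable def leadCoeffIdeal (i : ι) : Submodule R R :=
  (N ⊓ Finsupp.supported R R (Set.Iic i)).map (Finsupp.lapply i)

theorem leadCoeffIdeal_mono {P : Submodule R (ι →₀ R)} (h : P ≤ N) (i : ι) :
    leadCoeffIdeal P i ≤ leadCoeffIdeal N i :=
  map_mono (inf_le_inf_right _ h)

theorem exists_leadCoeffSection (i : ι) [Projective R (leadCoeffIdeal N i)] :
    ∃ s : leadCoeffIdeal N i →ₗ[R] ι →₀ R,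
      ∀ a, s a ∈ N ∧ s a ∈ Finsupp.supported R R (Set.Iic i) ∧ s a i = a := by
  let φ : ↥(N ⊓ Finsupp.supported R R (Set.Iic i)) →ₗ[R] leadCoeffIdeal N i :=
    (Finsupp.lapply i).submoduleMap _
  obtain ⟨σ, hσ⟩ :=
    projective_lifting_property φ LinearMap.id (LinearMap.submoduleMap_surjective _ _)
  refine ⟨Submodule.subtype _ ∘ₗ σ, fun a => ⟨(σ a).2.1, (σ a).2.2, ?_⟩⟩
  exact congrArg Subtype.val (LinearMap.congr_fun hσ a)

noncomputable def leadCoeffSection [∀ i, Projective R (leadCoeffIdeal N i)] (i : ι) :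
    leadCoeffIdeal N i →ₗ[R] ι →₀ R :=
  (exists_leadCoeffSection N i).choose

variable [∀ i, Projective R (leadCoeffIdeal N i)]

theorem leadCoeffSection_mem (i : ι) (a : leadCoeffIdeal N i) : leadCoeffSection N i a ∈ N :=
  ((exists_leadCoeffSection N i).choose_spec a).1

theorem leadCoeffSection_mem_supported (i : ι) (a : leadCoeffIdeal N i) :
    leadCoeffSection N i a ∈ Finsupp.supported R R (Set.Iic i) :=
  ((exists_leadCoeffSection N i).choose_spec a).2.1

theorem leadCoeffSection_apply_self (i : ι) (a : leadCoeffIdeal N i) :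
    leadCoeffSection N i a i = a :=
  ((exists_leadCoeffSection N i).choose_spec a).2.2

end LeadCoeff

section LeadCoeffEquiv

variable {R : Type u} [Ring R] {ι : Type w} [LinearOrder ι] (N : Submodule R (ι →₀ R))
  [∀ i, Projective R (leadCoeffIdeal N i)]

theorem lsum_leadCoeffSection_injective :
    Function.Injective (DFinsupp.lsum ℕ (leadCoeffSection N)) := by
  classical
  rw [← LinearMap.ker_eq_bot, LinearMap.ker_eq_bot']
  intro f hf
  by_contra hf0
  have hne : f.support.Nonempty :=
    Finset.nonempty_iff_ne_empty.2 (mt DFinsupp.support_eq_empty.1 hf0)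
  set m := f.support.max' hne
  -- the summands of index `j < m` are supported on `Iic j`, so vanish at `m`
  have hcoord : DFinsupp.lsum ℕ (leadCoeffSection N) f m = f m := by
    rw [DFinsupp.lsum_apply_apply, DFinsupp.sumAddHom_apply, DFinsupp.sum,
      Finsupp.finsetSum_apply, Finset.sum_eq_single_of_mem _ (f.support.max'_mem hne)]
    · exact leadCoeffSection_apply_self N m (f m)
    · intro j hj hjm
      have hlt : j < m := lt_of_le_of_ne (f.support.le_max' j hj) hjm
      exact Finsupp.notMem_support_iff.1 fun h =>
        hlt.not_ge ((Finsupp.mem_supported R _).1 (leadCoeffSection_mem_supported N j (f j)) h)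
  rw [hf, Finsupp.coe_zero, Pi.zero_apply] at hcoord
  exact DFinsupp.mem_support_iff.1 (f.support.max'_mem hne) (Subtype.ext hcoord.symm)

theorem range_lsum_leadCoeffSection_le :
    LinearMap.range (DFinsupp.lsum ℕ (leadCoeffSection N)) ≤ N := by
  rintro _ ⟨f, rfl⟩
  induction f using DFinsupp.induction with
  | h0 => simp
  | ha i a f _ _ ih =>
    rw [map_add, DFinsupp.lsum_single]
    exact add_mem (leadCoeffSection_mem N i a) ih

theorem le_range_lsum_leadCoeffSection [WellFoundedLT ι] :
    N ≤ LinearMap.range (DFinsupp.lsum ℕ (leadCoeffSection N)) := by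
  suffices key : ∀ i, ∀ x ∈ N, x ∈ Finsupp.supported R R (Set.Iic i) →
      x ∈ LinearMap.range (DFinsupp.lsum ℕ (leadCoeffSection N)) by
    intro x hx
    by_cases hx0 : x = 0
    · simp [hx0]
    · exact key _ x hx (Finsupp.mem_supported_Iic_max' (Finsupp.support_nonempty_iff.2 hx0))
  intro i
  induction i using WellFoundedLT.induction with
  | ind i IH =>
  intro x hxN hxi
  let a : leadCoeffIdeal N i := ⟨x i, mem_map_of_mem ⟨hxN, hxi⟩⟩
  set z := x - leadCoeffSection N i a with hz
  have hzN : z ∈ N := sub_mem hxN (leadCoeffSection_mem N i a)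
  have hzi : z ∈ Finsupp.supported R R (Set.Iic i) :=
    sub_mem hxi (leadCoeffSection_mem_supported N i a)
  have hz_self : z i = 0 := by
    simp [z, leadCoeffSection_apply_self, a]
  have hz_range : z ∈ LinearMap.range (DFinsupp.lsum ℕ (leadCoeffSection N)) := by
    by_cases hz0 : z = 0
    · simp [hz0]
    have hne := Finsupp.support_nonempty_iff.2 hz0
    refine IH _ ?_ z hzN (Finsupp.mem_supported_Iic_max' hne)
    have hmem := z.support.max'_mem hne
    refine lt_of_le_of_ne ((Finsupp.mem_supported R z).1 hzi hmem) fun h => ?_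
    exact Finsupp.mem_support_iff.1 hmem (h ▸ hz_self)
  have := add_mem hz_range (LinearMap.mem_range_self _ (DFinsupp.single i a))
  rwa [DFinsupp.lsum_single, hz, sub_add_cancel] at this

noncomputable def leadCoeffEquiv [WellFoundedLT ι] : (Π₀ i, leadCoeffIdeal N i) ≃ₗ[R] N :=
  (LinearEquiv.ofInjective _ (lsum_leadCoeffSection_injective N)).trans
    (LinearEquiv.ofEq _ _
      (le_antisymm (range_lsum_leadCoeffSection_le N) (le_range_lsum_leadCoeffSection N)))

end LeadCoeffEquiv

section Free

variable {R : Type u} [Ring R]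

theorem IsCompletelyVirtuallySemisimple.isRetract_of_le_finsupp {ι : Type w} [LinearOrder ι]
    [WellFoundedLT ι] (hR : IsCompletelyVirtuallySemisimple R R) {P N : Submodule R (ι →₀ R)}
    (hPN : P ≤ N) : IsRetract R P N :=
  have := hR.isVirtuallySemisimple.projective_submodule
  (IsRetract.dfinsupp fun i =>
      isVirtuallySemisimple_submodule_iff.1 (hR _) _ (leadCoeffIdeal_mono N hPN i)).congr
    (leadCoeffEquiv P) (leadCoeffEquiv N)

theorem IsCompletelyVirtuallySemisimple.finsupp (ι : Type w)
    (hR : IsCompletelyVirtuallySemisimple R R) :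
    IsCompletelyVirtuallySemisimple R (ι →₀ R) := by
  obtain ⟨_, _⟩ := exists_wellFoundedLT ι
  exact fun N => isVirtuallySemisimple_submodule_iff.2 fun P hPN => hR.isRetract_of_le_finsupp hPN

theorem IsCompletelyVirtuallySemisimple.isVirtuallySemisimple_of_injective {M : Type v}
    {M' : Type w} [AddCommGroup M] [Module R M] [AddCommGroup M'] [Module R M']
    (h : IsCompletelyVirtuallySemisimple R M') {f : M →ₗ[R] M'} (hf : Function.Injective f) :
    IsVirtuallySemisimple R M :=
  (h (LinearMap.range f)).of_linearEquiv (LinearEquiv.ofInjective f hf)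

theorem IsCompletelyVirtuallySemisimple.isVirtuallySemisimple_of_projective {M : Type v}
    [AddCommGroup M] [Module R M] [Projective R M] (hR : IsCompletelyVirtuallySemisimple R R) :
    IsVirtuallySemisimple R M :=
  let ⟨_, hs⟩ := projective_def.1 ‹Projective R M›
  (hR.finsupp M).isVirtuallySemisimple_of_injective hs.injective

theorem isCompletelyVirtuallySemisimple_of_forall_projective
    (h : ∀ (M : Type (max u v)) [AddCommGroup M] [Module R M], Projective R M →
      IsVirtuallySemisimple R M) :
    IsCompletelyVirtuallySemisimple R R := by
  have hR : IsVirtuallySemisimple R R :=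
    (h (ULift.{v} R) inferInstance).of_linearEquiv ULift.moduleEquiv.symm
  intro I
  have := hR.projective_submodule I
  exact (h (ULift.{max u v} I) inferInstance).of_linearEquiv ULift.moduleEquiv.symm

end Free

/-- A ring `R` is left completely virtually semisimple iff every free left `R`-module is
completely virtually semisimple; equivalently, iff every projective left `R`-module is
virtually semisimple. -/
theorem stmt_11 (R : Type u) [Ring R] :
    (IsCompletelyVirtuallySemisimple R R ↔
      ∀ (M : Type (max u v)) [AddCommGroup M] [Module R M], Module.Free R M →
        IsCompletelyVirtuallySemisimple R M) ∧
    (IsCompletelyVirtuallySemisimple R R ↔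
      ∀ (M : Type (max u v)) [AddCommGroup M] [Module R M], Module.Projective R M →
        IsVirtuallySemisimple R M) :=
  ⟨⟨fun hR M _ _ _ => (hR.finsupp _).of_linearEquiv (Free.chooseBasis R M).repr,
      fun h => (h (ULift.{v} R) inferInstance).of_linearEquiv ULift.moduleEquiv.symm⟩,
    ⟨fun hR _ _ _ _ => hR.isVirtuallySemisimple_of_projective,
      isCompletelyVirtuallySemisimple_of_forall_projective⟩⟩
end

section
/- Let R₁, …, Rₙ be rings. The product ring R₁ × ⋯ × Rₙ is left virtually semisimple if and only if each Rᵢ is left virtually semisimple, and R₁ × ⋯ × Rₙ is left completely virtually semisimple if and only if each Rᵢ is left completely virtually semisimple. -/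
universe u v w

section PiRing

variable {n : ℕ} {R : Fin n → Type u} [∀ i, Ring (R i)]

lemma single_mul' (i : Fin n) (a b : R i) :
    Pi.single i a * Pi.single i b = Pi.single i (a * b) := by
  funext j
  by_cases h : j = i
  · subst h; simp
  · simp [Pi.mul_apply, Pi.single_eq_of_ne h]

lemma single_one_mul' (i : Fin n) (x : ∀ j, R j) :
    Pi.single i (1 : R i) * x = Pi.single i (x i) := by
  funext j
  by_cases h : j = i
  · subst h; simp
  · simp [Pi.mul_apply, Pi.single_eq_of_ne h]

def piSub (p : ∀ i, Submodule (R i) (R i)) : Submodule (∀ i, R i) (∀ i, R i) where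
  carrier := {x | ∀ i, x i ∈ p i}
  add_mem' hx hy i := (p _).add_mem (hx i) (hy i)
  zero_mem' i := (p i).zero_mem
  smul_mem' s x hx i := (p i).smul_mem (s i) (hx i)

@[simp] lemma mem_piSub {p : ∀ i, Submodule (R i) (R i)} {x : ∀ i, R i} :
    x ∈ piSub p ↔ ∀ i, x i ∈ p i := Iff.rfl

def comp (N : Submodule (∀ i, R i) (∀ i, R i)) (i : Fin n) : Submodule (R i) (R i) where
  carrier := {y | Pi.single i y ∈ N}
  add_mem' {a b} ha hb := by
    have : Pi.single i (a + b) = Pi.single i a + Pi.single i b := by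
      simp [Pi.single_add]
    simpa [Set.mem_setOf_eq, this] using N.add_mem ha hb
  zero_mem' := by simp
  smul_mem' c y hy := by
    have h : Pi.single i (c • y) = (Pi.single i c) • (Pi.single i y) :=
      (single_mul' i c y).symm
    show Pi.single i (c • y) ∈ N
    rw [h]
    exact N.smul_mem _ hy

@[simp] lemma mem_comp {N : Submodule (∀ i, R i) (∀ i, R i)} {i : Fin n} {y : R i} :
    y ∈ comp N i ↔ Pi.single i y ∈ N := Iff.rfl

lemma piSub_comp (N : Submodule (∀ i, R i) (∀ i, R i)) : piSub (comp N) = N := by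
  ext x
  simp only [mem_piSub, mem_comp]
  constructor
  · intro h
    have : x = ∑ i, Pi.single i (x i) := (Finset.univ_sum_single x).symm
    rw [this]
    exact N.sum_mem fun i _ => h i
  · intro hx i
    have : Pi.single i (x i) = (Pi.single i (1 : R i)) • x := by
      rw [smul_eq_mul, single_one_mul']
    rw [this]
    exact N.smul_mem _ hx

lemma comp_piSub (p : ∀ i, Submodule (R i) (R i)) (i : Fin n) : comp (piSub p) i = p i := by
  ext y
  simp only [mem_comp, mem_piSub]
  constructor
  · intro h
    simpa using h i
  · intro hy j
    by_cases hj : j = i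
    · subst hj; simpa
    · simp [Pi.single_eq_of_ne hj]

lemma piSub_injective : Function.Injective (piSub (R := R)) := fun p q h =>
  funext fun i => by rw [← comp_piSub p i, h, comp_piSub]

lemma piSub_mono {p q : ∀ i, Submodule (R i) (R i)} (h : ∀ i, p i ≤ q i) :
    piSub p ≤ piSub q := fun _ hx i => h i (hx i)

lemma piSub_le_iff {p q : ∀ i, Submodule (R i) (R i)} :
    piSub p ≤ piSub q ↔ ∀ i, p i ≤ q i := by
  refine ⟨fun h i y hy => ?_, piSub_mono⟩
  have hm : Pi.single i y ∈ piSub p := by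
    intro j
    by_cases hj : j = i
    · subst hj; simpa
    · simp [Pi.single_eq_of_ne hj]
  simpa using h hm i

lemma piSub_bot : piSub (fun i => (⊥ : Submodule (R i) (R i))) = ⊥ := by
  ext x
  simp [funext_iff]

lemma piSub_top : piSub (fun i => (⊤ : Submodule (R i) (R i))) = ⊤ := by
  ext x; simp

lemma piSub_inf (p q : ∀ i, Submodule (R i) (R i)) :
    piSub p ⊓ piSub q = piSub (fun i => p i ⊓ q i) := by
  ext x
  simp [forall_and]

lemma piSub_sup (p q : ∀ i, Submodule (R i) (R i)) :
    piSub p ⊔ piSub q = piSub (fun i => p i ⊔ q i) := by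
  refine le_antisymm (sup_le (piSub_mono fun i => le_sup_left)
    (piSub_mono fun i => le_sup_right)) ?_
  intro x hx
  have h : ∀ i, ∃ a ∈ p i, ∃ b ∈ q i, a + b = x i := fun i =>
    Submodule.mem_sup.mp (hx i)
  choose a ha b hb hab using h
  exact Submodule.mem_sup.mpr ⟨a, ha, b, hb, funext hab⟩

lemma isCompl_piSub {p q : ∀ i, Submodule (R i) (R i)} :
    IsCompl (piSub p) (piSub q) ↔ ∀ i, IsCompl (p i) (q i) := by
  constructor
  · intro h i
    have h1 : p i ⊓ q i = ⊥ := by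
      have := h.inf_eq_bot
      rw [piSub_inf, ← piSub_bot] at this
      exact congrFun (piSub_injective this) i
    have h2 : p i ⊔ q i = ⊤ := by
      have := h.sup_eq_top
      rw [piSub_sup, ← piSub_top] at this
      exact congrFun (piSub_injective this) i
    exact isCompl_iff.mpr ⟨disjoint_iff.mpr h1, codisjoint_iff.mpr h2⟩
  · intro h
    refine isCompl_iff.mpr ⟨disjoint_iff.mpr ?_, codisjoint_iff.mpr ?_⟩
    · rw [piSub_inf, ← piSub_bot]
      exact congrArg piSub (funext fun i => (h i).inf_eq_bot)
    · rw [piSub_sup, ← piSub_top]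
      exact congrArg piSub (funext fun i => (h i).sup_eq_top)

end PiRing

section Iso
variable {n : ℕ} {R : Fin n → Type u} [∀ i, Ring (R i)]
variable {p q : ∀ i, Submodule (R i) (R i)}

def piEquiv (f : ∀ i, (p i ≃ₗ[R i] q i)) : (piSub p ≃ₗ[∀ i, R i] piSub q) where
  toFun x := ⟨fun i => f i ⟨x.1 i, x.2 i⟩, fun i => (f i ⟨x.1 i, x.2 i⟩).2⟩
  invFun y := ⟨fun i => (f i).symm ⟨y.1 i, y.2 i⟩, fun i => ((f i).symm ⟨y.1 i, y.2 i⟩).2⟩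
  map_add' x y := Subtype.ext <| funext fun i => by
    have h : (⟨(↑(x + y) : ∀ j, R j) i, (x + y).2 i⟩ : p i) = ⟨x.1 i, x.2 i⟩ + ⟨y.1 i, y.2 i⟩ :=
      rfl
    show ((f i ⟨(↑(x + y) : ∀ j, R j) i, (x + y).2 i⟩ : q i) : R i) = _
    rw [h, map_add]
    rfl
  map_smul' s x := Subtype.ext <| funext fun i => by
    have h : (⟨(↑(s • x) : ∀ j, R j) i, (s • x).2 i⟩ : p i) = s i • ⟨x.1 i, x.2 i⟩ := rfl
    show ((f i ⟨(↑(s • x) : ∀ j, R j) i, (s • x).2 i⟩ : q i) : R i) = _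
    rw [h, map_smul]
    rfl
  left_inv x := Subtype.ext <| funext fun i =>
    congrArg Subtype.val ((f i).symm_apply_apply ⟨x.1 i, x.2 i⟩)
  right_inv y := Subtype.ext <| funext fun i =>
    congrArg Subtype.val ((f i).apply_symm_apply ⟨y.1 i, y.2 i⟩)

def injSub (i : Fin n) (y : p i) : piSub p :=
  ⟨Pi.single i (y : R i), fun j => by
    by_cases hj : j = i
    · subst hj; simpa using y.2
    · simp [Pi.single_eq_of_ne hj]⟩

lemma injSub_single (F : piSub p →ₗ[∀ i, R i] piSub q) (i : Fin n) (y : p i) :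
    (↑(F (injSub i y)) : ∀ j, R j) = Pi.single i ((↑(F (injSub i y)) : ∀ j, R j) i) := by
  have he : injSub i y = (Pi.single i (1 : R i) : ∀ j, R j) • injSub i y := by
    apply Subtype.ext
    show (Pi.single i (y : R i) : ∀ j, R j) = Pi.single i (1 : R i) * Pi.single i (y : R i)
    rw [single_one_mul', Pi.single_eq_same]
  calc (↑(F (injSub i y)) : ∀ j, R j)
      = ↑((Pi.single i (1 : R i) : ∀ j, R j) • F (injSub i y)) := by rw [← map_smul, ← he]
    _ = Pi.single i (1 : R i) * ↑(F (injSub i y)) := rfl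
    _ = Pi.single i ((↑(F (injSub i y)) : ∀ j, R j) i) := single_one_mul' _ _

def compEquiv (F : piSub p ≃ₗ[∀ i, R i] piSub q) (i : Fin n) : p i ≃ₗ[R i] q i where
  toFun y := ⟨(↑(F (injSub i y)) : ∀ j, R j) i, (F (injSub i y)).2 i⟩
  invFun z := ⟨(↑(F.symm (injSub i z)) : ∀ j, R j) i, (F.symm (injSub i z)).2 i⟩
  map_add' a b := Subtype.ext <| by
    have h : injSub (p := p) i (a + b) = injSub i a + injSub i b := by
      apply Subtype.ext
      show Pi.single i ((a : R i) + b) = _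
      rw [Pi.single_add]
      rfl
    show (↑(F (injSub i (a + b))) : ∀ j, R j) i = _
    rw [h, map_add]
    rfl
  map_smul' r a := Subtype.ext <| by
    have h : injSub (p := p) i (r • a) = (Pi.single i r : ∀ j, R j) • injSub i a := by
      apply Subtype.ext
      show Pi.single i (r * (a : R i)) = Pi.single i r * Pi.single i (a : R i)
      rw [single_mul']
    show (↑(F (injSub i (r • a))) : ∀ j, R j) i = _
    rw [h, map_smul]
    show (Pi.single i r * ↑(F (injSub i a))) i = r * (↑(F (injSub i a)) : ∀ j, R j) i
    simp [Pi.mul_apply]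
  left_inv a := by
    apply Subtype.ext
    have h : injSub (p := q) i ⟨(↑(F (injSub i a)) : ∀ j, R j) i, (F (injSub i a)).2 i⟩
        = F (injSub i a) :=
      Subtype.ext (injSub_single (F : piSub p →ₗ[∀ i, R i] piSub q) i a).symm
    show (↑(F.symm (injSub i ⟨_, _⟩)) : ∀ j, R j) i = (a : R i)
    rw [h, F.symm_apply_apply]
    show Pi.single i (a : R i) i = (a : R i)
    simp
  right_inv b := by
    apply Subtype.ext
    have h : injSub (p := p) i ⟨(↑(F.symm (injSub i b)) : ∀ j, R j) i, (F.symm (injSub i b)).2 i⟩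
        = F.symm (injSub i b) :=
      Subtype.ext (injSub_single (F.symm : piSub q →ₗ[∀ i, R i] piSub p) i b).symm
    show (↑(F (injSub i ⟨_, _⟩)) : ∀ j, R j) i = (b : R i)
    rw [h, F.apply_symm_apply]
    show Pi.single i (b : R i) i = (b : R i)
    simp

lemma nonempty_piSub_equiv_iff :
    Nonempty (piSub p ≃ₗ[∀ i, R i] piSub q) ↔ ∀ i, Nonempty (p i ≃ₗ[R i] q i) :=
  ⟨fun ⟨F⟩ i => ⟨compEquiv F i⟩, fun h => ⟨piEquiv fun i => (h i).some⟩⟩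

end Iso

section Subtype
variable {A : Type u} [Ring A] {M : Type v} [AddCommGroup M] [Module A M]

lemma vss_subtype_iff (N : Submodule A M) :
    IsVirtuallySemisimple A N ↔
      ∀ P : Submodule A M, P ≤ N → ∃ Q : Submodule A M, Q ≤ N ∧
        (∃ Q' : Submodule A M, Q' ≤ N ∧ Q ⊓ Q' = ⊥ ∧ Q ⊔ Q' = N) ∧
        Nonempty (P ≃ₗ[A] Q) := by
  have hinj : Function.Injective N.subtype := N.injective_subtype
  constructor
  · intro h P hP
    obtain ⟨K, ⟨K', hKK'⟩, ⟨e⟩⟩ := h (P.comap N.subtype)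
    refine ⟨K.map N.subtype, Submodule.map_subtype_le N K,
      ⟨K'.map N.subtype, Submodule.map_subtype_le N K', ?_, ?_⟩, ?_⟩
    · rw [← Submodule.map_inf _ hinj, hKK'.inf_eq_bot, Submodule.map_bot]
    · rw [← Submodule.map_sup, hKK'.sup_eq_top, Submodule.map_top, Submodule.range_subtype]
    · exact ⟨((Submodule.comapSubtypeEquivOfLe hP).symm.trans e).trans
        (Submodule.equivMapOfInjective N.subtype hinj K)⟩
  · intro h P₀
    obtain ⟨Q, hQN, ⟨Q', hQ'N, hinf, hsup⟩, ⟨e⟩⟩ :=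
      h (P₀.map N.subtype) (Submodule.map_subtype_le N P₀)
    refine ⟨Q.comap N.subtype, ⟨Q'.comap N.subtype, ?_⟩, ?_⟩
    · have hmapQ : (Q.comap N.subtype).map N.subtype = Q := by
        rw [Submodule.map_comap_subtype, inf_eq_right.mpr hQN]
      have hmapQ' : (Q'.comap N.subtype).map N.subtype = Q' := by
        rw [Submodule.map_comap_subtype, inf_eq_right.mpr hQ'N]
      have hminj := Submodule.map_injective_of_injective hinj
      refine isCompl_iff.mpr ⟨disjoint_iff.mpr ?_, codisjoint_iff.mpr ?_⟩
      · apply hminj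
        rw [Submodule.map_inf _ hinj, hmapQ, hmapQ', Submodule.map_bot, hinf]
      · apply hminj
        rw [Submodule.map_sup, hmapQ, hmapQ', Submodule.map_top, Submodule.range_subtype, hsup]
    · exact ⟨((Submodule.equivMapOfInjective N.subtype hinj P₀).trans e).trans
        (Submodule.comapSubtypeEquivOfLe hQN).symm⟩

lemma cvss_iff (A : Type u) [Ring A] :
    IsCompletelyVirtuallySemisimple A A ↔
      ∀ N P : Submodule A A, P ≤ N → ∃ Q : Submodule A A, Q ≤ N ∧
        (∃ Q' : Submodule A A, Q' ≤ N ∧ Q ⊓ Q' = ⊥ ∧ Q ⊔ Q' = N) ∧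
        Nonempty (P ≃ₗ[A] Q) :=
  forall_congr' fun N => vss_subtype_iff N

end Subtype

section Main
variable {n : ℕ} {R : Fin n → Type u} [∀ i, Ring (R i)]

lemma comp_mono {N N' : Submodule (∀ i, R i) (∀ i, R i)} (h : N ≤ N') (i : Fin n) :
    comp N i ≤ comp N' i := fun _ hy => h hy

lemma comp_eq_of_piSub_eq {p : ∀ i, Submodule (R i) (R i)}
    {N : Submodule (∀ i, R i) (∀ i, R i)} (h : N = piSub p) (i : Fin n) : comp N i = p i := by
  rw [h, comp_piSub]

/-- A finite product of rings is left (completely) virtually semisimple iff each factor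
is left (completely) virtually semisimple. -/
theorem stmt_13 (n : ℕ) (R : Fin n → Type u) [∀ i, Ring (R i)] :
    (IsVirtuallySemisimple (∀ i, R i) (∀ i, R i) ↔
      ∀ i, IsVirtuallySemisimple (R i) (R i)) ∧
    (IsCompletelyVirtuallySemisimple (∀ i, R i) (∀ i, R i) ↔
      ∀ i, IsCompletelyVirtuallySemisimple (R i) (R i)) := by
  constructor
  · constructor
    · intro h i N
      set p := Function.update (fun j => (⊥ : Submodule (R j) (R j))) i N with hp
      obtain ⟨K, ⟨K', hc⟩, ⟨F⟩⟩ := h (piSub p)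
      have hc' : ∀ j, IsCompl (comp K j) (comp K' j) :=
        isCompl_piSub.mp (by rwa [piSub_comp, piSub_comp])
      have F' : (piSub p ≃ₗ[∀ j, R j] piSub (comp K)) :=
        F.trans (LinearEquiv.ofEq _ _ (piSub_comp K).symm)
      refine ⟨comp K i, ⟨comp K' i, hc' i⟩,
        ⟨(LinearEquiv.ofEq N (p i) ?_).trans (compEquiv F' i)⟩⟩
      rw [hp, Function.update_self]
    · intro h N
      choose K hc e using fun i => h i (comp N i)
      choose K' hK' using hc
      refine ⟨piSub K, ⟨piSub K', isCompl_piSub.mpr hK'⟩, ?_⟩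
      rw [← piSub_comp N]
      exact nonempty_piSub_equiv_iff.mpr e
  · rw [cvss_iff]
    constructor
    · intro h i
      rw [cvss_iff]
      intro N P hPN
      set pN := Function.update (fun j => (⊥ : Submodule (R j) (R j))) i N with hpN
      set pP := Function.update (fun j => (⊥ : Submodule (R j) (R j))) i P with hpP
      have hle : piSub pP ≤ piSub pN := by
        refine piSub_mono fun j => ?_
        by_cases hj : j = i
        · subst hj; rw [hpN, hpP, Function.update_self, Function.update_self]; exact hPN
        · rw [hpN, hpP, Function.update_of_ne hj, Function.update_of_ne hj]
      obtain ⟨Q, hQN, ⟨Q', hQ'N, hinf, hsup⟩, ⟨F⟩⟩ := h (piSub pN) (piSub pP) hle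
      have hQN' : ∀ j, comp Q j ≤ pN j := by
        rw [← piSub_comp Q, piSub_le_iff] at hQN; exact hQN
      have hQ'N' : ∀ j, comp Q' j ≤ pN j := by
        rw [← piSub_comp Q', piSub_le_iff] at hQ'N; exact hQ'N
      have hinf' : ∀ j, comp Q j ⊓ comp Q' j = ⊥ := by
        rw [← piSub_comp Q, ← piSub_comp Q', piSub_inf, ← piSub_bot] at hinf
        exact fun j => congrFun (piSub_injective hinf) j
      have hsup' : ∀ j, comp Q j ⊔ comp Q' j = pN j := by
        rw [← piSub_comp Q, ← piSub_comp Q', piSub_sup] at hsup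
        exact fun j => congrFun (piSub_injective hsup) j
      have F' : (piSub pP ≃ₗ[∀ j, R j] piSub (comp Q)) :=
        F.trans (LinearEquiv.ofEq _ _ (piSub_comp Q).symm)
      have hNi : pN i = N := by rw [hpN, Function.update_self]
      have hPi : pP i = P := by rw [hpP, Function.update_self]
      exact ⟨comp Q i, hNi ▸ hQN' i, ⟨comp Q' i, hNi ▸ hQ'N' i, hinf' i, hNi ▸ hsup' i⟩,
        ⟨(LinearEquiv.ofEq P (pP i) hPi.symm).trans (compEquiv F' i)⟩⟩
    · intro h N P hPN
      have hle : ∀ i, comp P i ≤ comp N i := comp_mono hPN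
      have h' := fun i => (cvss_iff (R i)).mp (h i) (comp N i) (comp P i) (hle i)
      choose Q hQN htail using h'
      choose Q' hQ'N hinf hsup using fun i => (htail i).1
      have e := fun i => (htail i).2
      refine ⟨piSub Q, ?_, ⟨piSub Q', ?_, ?_, ?_⟩, ?_⟩
      · rw [← piSub_comp N]; exact piSub_mono hQN
      · rw [← piSub_comp N]; exact piSub_mono hQ'N
      · rw [piSub_inf, ← piSub_bot]; exact congrArg piSub (funext hinf)
      · rw [piSub_sup, ← piSub_comp N]; exact congrArg piSub (funext hsup)
      · rw [← piSub_comp P]; exact nonempty_piSub_equiv_iff.mpr e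

end Main
end
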